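/- arXiv:2306.01569 — 3 statements merged into one kernel-verified Lean document; each statement's English description precedes it below -/
import Mathlib

section
/- Let φ : ℝ → ℝ be continuous and T > 0. Then the following are equivalent: (i) for every continuous 1-periodic function x_p : ℝ → ℝ and every t ∈ ℝ, x_p(φ(t+T)) = x_p(φ(t)); (ii) there exists n ∈ ℤ such that φ(t+T) = φ(t) + n for all t ∈ ℝ. (That is, T-periodicity of x_p ∘ φ for arbitrary 1-periodic waveforms x_p holds exactly when the phase φ advances by a fixed integer over each period T.) -/
lemma aux_int_diff (a b : ℝ)
    (hc : Real.cos (2 * Real.pi * a) = Real.cos (2 * Real.pi * b))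
    (hs : Real.sin (2 * Real.pi * a) = Real.sin (2 * Real.pi * b)) :
    ∃ k : ℤ, a - b = (k : ℝ) := by
  have h := Real.Angle.cos_sin_inj hc hs
  rw [Real.Angle.angle_eq_iff_two_pi_dvd_sub] at h
  obtain ⟨k, hk⟩ := h
  refine ⟨k, ?_⟩
  have h2 : (2 * Real.pi) * (a - b) = (2 * Real.pi) * (k : ℝ) := by ring_nf; ring_nf at hk; linarith
  exact mul_left_cancel₀ (by positivity) h2

/-- T-periodicity of `x_p ∘ φ` for every continuous 1-periodic waveform `x_p` holds
exactly when the continuous phase `φ` advances by a fixed integer over each period `T`. -/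
theorem periodic_output_iff_phase_advances_by_integer
    (φ : ℝ → ℝ) (hφ : Continuous φ) (T : ℝ) (hT : 0 < T) :
    (∀ xp : ℝ → ℝ, Continuous xp → (∀ s : ℝ, xp (s + 1) = xp s) →
      ∀ t : ℝ, xp (φ (t + T)) = xp (φ t)) ↔
    (∃ n : ℤ, ∀ t : ℝ, φ (t + T) = φ t + (n : ℝ)) := by
  constructor
  · intro h
    have key : ∀ t : ℝ, ∃ k : ℤ, φ (t + T) - φ t = (k : ℝ) := by
      intro t
      have hc := h (fun s => Real.cos (2 * Real.pi * s))
        (Real.continuous_cos.comp (continuous_const.mul continuous_id))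
        (fun s => by
          show Real.cos (2 * Real.pi * (s + 1)) = Real.cos (2 * Real.pi * s)
          rw [mul_add, mul_one, Real.cos_add_two_pi]) t
      have hs := h (fun s => Real.sin (2 * Real.pi * s))
        (Real.continuous_sin.comp (continuous_const.mul continuous_id))
        (fun s => by
          show Real.sin (2 * Real.pi * (s + 1)) = Real.sin (2 * Real.pi * s)
          rw [mul_add, mul_one, Real.sin_add_two_pi]) t
      exact aux_int_diff _ _ hc hs
    obtain ⟨n, hn⟩ := key 0
    refine ⟨n, fun t => ?_⟩
    by_contra hne
    obtain ⟨m, hm⟩ := key t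
    have hmn : m ≠ n := fun e => hne (by rw [e] at hm; linarith)
    set F : ℝ → ℝ := fun s => φ (s + T) - φ s with hF
    have hFc : Continuous F := (hφ.comp (continuous_id.add continuous_const)).sub hφ
    have h0 : F 0 = (n : ℝ) := hn
    have ht : F t = (m : ℝ) := hm
    have hmem : ((min m n : ℤ) : ℝ) + 1/2 ∈ Set.uIcc (F 0) (F t) := by
      rw [Set.mem_uIcc, h0, ht]
      rcases lt_or_gt_of_ne hmn with hlt | hlt
      · right
        have h1 : (m : ℝ) + 1 ≤ (n : ℝ) := by exact_mod_cast hlt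
        rw [min_eq_left hlt.le]
        constructor <;> linarith
      · left
        have h1 : (n : ℝ) + 1 ≤ (m : ℝ) := by exact_mod_cast hlt
        rw [min_eq_right hlt.le]
        constructor <;> linarith
    obtain ⟨s, _, hsc⟩ := intermediate_value_uIcc (f := F) (a := 0) (b := t)
      (hFc.continuousOn) hmem
    obtain ⟨k, hk⟩ := key s
    have hkc : (k : ℝ) = ((min m n : ℤ) : ℝ) + 1/2 := by
      rw [← hsc]; exact hk.symm
    have h2 : ((k : ℝ)) * 2 = ((min m n : ℤ) : ℝ) * 2 + 1 := by linarith
    have h3 : k * 2 = min m n * 2 + 1 := by exact_mod_cast h2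
    omega
  · rintro ⟨n, hn⟩ xp hxc hxp t
    rw [hn t]
    have hp : Function.Periodic xp 1 := hxp
    have := (hp.int_mul n) (φ t)
    simpa using this
end

section
/- Let N ≥ 1, T > 0, and let A : ℝ → Matrix (Fin N) (Fin N) ℝ be continuous with A(t+T) = A(t) for all t. Let Φ : ℝ → Matrix (Fin N) (Fin N) ℝ be differentiable with Φ'(t) = A(t) * Φ(t) for all t and Φ(0) = 1 (the fundamental matrix solution). Suppose x : ℝ → (Fin N → ℝ) is differentiable with x'(t) = (A t).mulVec (x t) for all t, x is T-periodic, and x(0) ≠ 0. Then (Φ T).mulVec (x 0) = x 0; in particular 1 is an eigenvalue of the monodromy matrix Φ(T), i.e., at least one Floquet multiplier of the periodic linear system equals 1. -/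
/-!
Both `x` and `t ↦ Φ t *ᵥ x 0` solve the linear system `y' = A(t) y` and agree at `t = 0`.
On every compact time interval `‖A t‖` is bounded, so the vector field is uniformly Lipschitz
there and Grönwall's uniqueness theorem makes the two solutions equal. Hence
`Φ T *ᵥ x 0 = x T = x 0`, and the nonzero vector `x 0` is an eigenvector of `Φ T` for `1`.
-/

open Set Matrix

theorem linear_ODE_solution_unique {E : Type*} [NormedAddCommGroup E] [NormedSpace ℝ E]
    {A : ℝ → E →L[ℝ] E} (hA : Continuous A) {f g : ℝ → E}
    (hf : ∀ t, HasDerivAt f (A t (f t)) t) (hg : ∀ t, HasDerivAt g (A t (g t)) t) {t₀ : ℝ}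
    (h : f t₀ = g t₀) : f = g := by
  ext t
  obtain ⟨a, b, ht, ht₀⟩ : ∃ a b, t ∈ Ioo a b ∧ t₀ ∈ Ioo a b :=
    ⟨min t t₀ - 1, max t t₀ + 1, by constructor <;> constructor <;> grind⟩
  obtain ⟨C, hC⟩ := isCompact_Icc.exists_bound_of_continuousOn (hA.continuousOn (s := Icc a b))
  have hlip (s : ℝ) (hs : s ∈ Ioo a b) : LipschitzOnWith C.toNNReal (A s) univ :=
    ((A s).lipschitz.weaken
      (NNReal.le_toNNReal_of_coe_le (hC s (Ioo_subset_Icc_self hs)))).lipschitzOnWith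
  exact ODE_solution_unique_of_mem_Ioo hlip ht₀ (fun s _ => ⟨hf s, trivial⟩)
    (fun s _ => ⟨hg s, trivial⟩) h ht

theorem Matrix.linear_ODE_solution_unique {n : Type*} [Fintype n] [DecidableEq n]
    {A : ℝ → Matrix n n ℝ} (hA : Continuous A) {f g : ℝ → n → ℝ}
    (hf : ∀ t, HasDerivAt f (A t *ᵥ f t) t) (hg : ∀ t, HasDerivAt g (A t *ᵥ g t) t) {t₀ : ℝ}
    (h : f t₀ = g t₀) : f = g :=
  let L : Matrix n n ℝ →ₗ[ℝ] (n → ℝ) →L[ℝ] (n → ℝ) :=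
    LinearMap.toContinuousLinearMap.toLinearMap ∘ₗ Matrix.toLin'.toLinearMap
  _root_.linear_ODE_solution_unique (A := fun t => L (A t))
    (L.continuous_of_finiteDimensional.comp hA) hf hg h

theorem Matrix.hasDerivAt_mulVec_of_hasDerivAt_entries {m n : Type*} [Fintype n]
    {Φ : ℝ → Matrix m n ℝ} {Φ' : Matrix m n ℝ} {t : ℝ}
    (h : ∀ i j, HasDerivAt (fun s => Φ s i j) (Φ' i j) t) (v : n → ℝ) :
    HasDerivAt (fun s => Φ s *ᵥ v) (Φ' *ᵥ v) t :=
  hasDerivAt_pi.2 fun i => HasDerivAt.fun_sum fun j _ => (h i j).mul_const (v j)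

theorem floquet_multiplier_one_of_periodic_solution_general
    (N : ℕ) (T : ℝ)
    (A : ℝ → Matrix (Fin N) (Fin N) ℝ)
    (hAcont : ∀ i j : Fin N, Continuous fun t => A t i j)
    (Φ : ℝ → Matrix (Fin N) (Fin N) ℝ)
    (hΦ : ∀ (t : ℝ) (i j : Fin N), HasDerivAt (fun s => Φ s i j) ((A t * Φ t) i j) t)
    (hΦ0 : Φ 0 = 1)
    (x : ℝ → (Fin N → ℝ))
    (hx : ∀ t : ℝ, HasDerivAt x ((A t).mulVec (x t)) t)
    (hxper : ∀ t : ℝ, x (t + T) = x t)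
    (hx0 : x 0 ≠ 0) :
    (Φ T).mulVec (x 0) = x 0 ∧
      Module.End.HasEigenvalue (Matrix.toLin' (Φ T)) 1 := by
  have hsol : x = fun t => Φ t *ᵥ x 0 := by
    refine Matrix.linear_ODE_solution_unique (continuous_matrix hAcont) hx (fun t => ?_)
      (t₀ := 0) (by simp [hΦ0])
    simpa only [Matrix.mulVec_mulVec] using
      Matrix.hasDerivAt_mulVec_of_hasDerivAt_entries (hΦ t) (x 0)
  have hfix : Φ T *ᵥ x 0 = x 0 := by
    simpa [← congrFun hsol T] using hxper 0
  exact ⟨hfix, Module.End.hasEigenvalue_of_hasEigenvector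
    ⟨Module.End.mem_eigenspace_iff.2 (by simpa using hfix), hx0⟩⟩

/-- If an LPTV system `x' = A(t) x` with fundamental matrix `Φ` has a nontrivial
T-periodic solution, then the monodromy matrix `Φ(T)` fixes `x 0`; in particular `1`
is a Floquet multiplier. -/
theorem floquet_multiplier_one_of_periodic_solution
    (N : ℕ) (hN : 1 ≤ N) (T : ℝ) (hT : 0 < T)
    (A : ℝ → Matrix (Fin N) (Fin N) ℝ)
    (hAcont : ∀ i j : Fin N, Continuous fun t => A t i j)
    (hAper : ∀ t : ℝ, A (t + T) = A t)
    (Φ : ℝ → Matrix (Fin N) (Fin N) ℝ)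
    (hΦ : ∀ (t : ℝ) (i j : Fin N), HasDerivAt (fun s => Φ s i j) ((A t * Φ t) i j) t)
    (hΦ0 : Φ 0 = 1)
    (x : ℝ → (Fin N → ℝ))
    (hx : ∀ t : ℝ, HasDerivAt x ((A t).mulVec (x t)) t)
    (hxper : ∀ t : ℝ, x (t + T) = x t)
    (hx0 : x 0 ≠ 0) :
    (Φ T).mulVec (x 0) = x 0 ∧
      Module.End.HasEigenvalue (Matrix.toLin' (Φ T)) 1 :=
  floquet_multiplier_one_of_periodic_solution_general N T A hAcont Φ hΦ hΦ0 x hx hxper hx0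
end

section
/- Let N ≥ 1 and m ≥ 1. For each i ∈ Fin m let uᵢ, vᵢ : ℝ → EuclideanSpace ℂ (Fin N) be continuous with ‖uᵢ(t)‖ ≤ B and ‖vᵢ(t)‖ ≤ B' for all t (B, B' ≥ 0), and let μᵢ ∈ ℂ be such that μ₀ = 0 and Re μᵢ < 0 for all i ≠ 0. Let b : ℝ → EuclideanSpace ℂ (Fin N) be continuous with ‖b(τ)‖ ≤ ε for all τ (ε ≥ 0), and suppose the orthogonality condition ⟪v₀(τ), b(τ)⟫ = 0 holds for all τ. Fix t₀ ∈ ℝ. Then the Floquet-form response x(t) := Σ_{i ∈ Fin m} (∫_{t₀}^{t} exp(μᵢ·(t−τ)) · ⟪vᵢ(τ), b(τ)⟫ dτ) • uᵢ(t) satisfies, for all t ≥ t₀, ‖x(t)‖ ≤ ε·B·B'·Σ_{i ≠ 0} 1/(−Re μᵢ). In particular x remains bounded for all t ≥ t₀, with bound proportional to ε. (This is the key quantitative step of the hierarchical PPV theorem: when the time shift α is chosen so that the residual input is orthogonal to v₁ — i.e., α satisfies the hierarchical PPV equation dα/dt = v₁ᵀ(t+α(t))·b_φ(φ*(t+α(t)),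 t) — the orbital deviation δφ of the synchronized group of coupled oscillators from the time-shifted locked orbit φ*(t+α(t)) remains bounded and small for all time, so the group behaves as a single effective oscillator with effective PPV v₁.) -/
/-!
Orthogonality of `b` to `v₀` kills the integrand of the neutral mode `μ₀ = 0`, the only mode
whose integral could grow with `t`. Every other mode is a convolution of the bounded function
`⟪vᵢ, b⟫` (of size at most `B'ε`) with the decaying kernel `exp (μᵢ s)`, whose integral over
`s ≥ 0` is `1 / (-Re μᵢ)`; multiplying by `‖uᵢ‖ ≤ B` and summing gives the bound.
-/

open Set

theorem integral_exp_mul_sub_eq {r : ℝ} (hr : r ≠ 0) (t₀ t : ℝ) :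
    ∫ τ in t₀..t, Real.exp (r * (t - τ)) = (1 - Real.exp (r * (t - t₀))) / (-r) := by
  rw [intervalIntegral.integral_comp_sub_left (fun x => Real.exp (r * x)),
    intervalIntegral.integral_comp_mul_left (fun x => Real.exp x) hr, integral_exp,
    sub_self, mul_zero, Real.exp_zero, smul_eq_mul]
  field_simp
  ring

theorem integral_exp_mul_sub_le {r : ℝ} (hr : r < 0) (t₀ t : ℝ) :
    ∫ τ in t₀..t, Real.exp (r * (t - τ)) ≤ 1 / (-r) := by
  rw [integral_exp_mul_sub_eq hr.ne]
  gcongr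
  · linarith
  · exact sub_le_self _ (Real.exp_nonneg _)

theorem norm_integral_exp_mul_le {μ : ℂ} (hμ : μ.re < 0) {g : ℝ → ℂ} {C t₀ t : ℝ}
    (ht : t₀ ≤ t) (hg : ∀ τ ∈ Icc t₀ t, ‖g τ‖ ≤ C) :
    ‖∫ τ in t₀..t, Complex.exp (μ * (t - τ)) * g τ‖ ≤ C * (1 / -μ.re) := by
  have hC : 0 ≤ C := (norm_nonneg _).trans (hg t ⟨ht, le_rfl⟩)
  calc ‖∫ τ in t₀..t, Complex.exp (μ * (t - τ)) * g τ‖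
      ≤ ∫ τ in t₀..t, C * Real.exp (μ.re * (t - τ)) := by
        refine intervalIntegral.norm_integral_le_of_norm_le ht
          (Filter.Eventually.of_forall fun τ hτ => ?_)
          (Continuous.intervalIntegrable (by fun_prop) _ _)
        have hre : (μ * (t - τ : ℂ)).re = μ.re * (t - τ) := by simp
        rw [norm_mul, Complex.norm_exp, hre, mul_comm]
        exact mul_le_mul_of_nonneg_right (hg τ (Ioc_subset_Icc_self hτ)) (Real.exp_nonneg _)
    _ ≤ C * (1 / -μ.re) := by
        rw [intervalIntegral.integral_const_mul]
        exact mul_le_mul_of_nonneg_left (integral_exp_mul_sub_le hμ t₀ t) hC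

theorem hierarchical_PPV_response_bounded_general
    (N m : ℕ) (hm : 0 < m)
    (u v : Fin m → ℝ → EuclideanSpace ℂ (Fin N))
    (B B' : ℝ) (hB' : 0 ≤ B')
    (hubound : ∀ (i : Fin m) (t : ℝ), ‖u i t‖ ≤ B)
    (hvbound : ∀ (i : Fin m) (t : ℝ), ‖v i t‖ ≤ B')
    (μ : Fin m → ℂ)
    (hμneg : ∀ i : Fin m, i ≠ ⟨0, hm⟩ → (μ i).re < 0)
    (b : ℝ → EuclideanSpace ℂ (Fin N))
    (ε : ℝ)
    (hbbound : ∀ τ : ℝ, ‖b τ‖ ≤ ε)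
    (horth : ∀ τ : ℝ, (inner ℂ (v ⟨0, hm⟩ τ) (b τ) : ℂ) = 0)
    (t₀ : ℝ) :
    ∀ t : ℝ, t₀ ≤ t →
      ‖∑ i : Fin m,
          (∫ τ in t₀..t, Complex.exp (μ i * (t - τ)) * (inner ℂ (v i τ) (b τ) : ℂ)) •
            u i t‖ ≤
        ε * B * B' * ∑ i ∈ Finset.univ.filter (· ≠ (⟨0, hm⟩ : Fin m)),
          1 / (-(μ i).re) := by
  intro t ht
  set i₀ : Fin m := ⟨0, hm⟩
  have hinner (i : Fin m) (τ : ℝ) : ‖(inner ℂ (v i τ) (b τ) : ℂ)‖ ≤ B' * ε :=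
    (norm_inner_le_norm _ _).trans (mul_le_mul (hvbound i τ) (hbbound τ) (norm_nonneg _) hB')
  have hneutral :
      (∫ τ in t₀..t, Complex.exp (μ i₀ * (t - τ)) * (inner ℂ (v i₀ τ) (b τ) : ℂ)) • u i₀ t
        = 0 := by
    simp [horth]
  have hdecaying (i : Fin m) (hi : i ≠ i₀) :
      ‖(∫ τ in t₀..t, Complex.exp (μ i * (t - τ)) * (inner ℂ (v i τ) (b τ) : ℂ)) • u i t‖
        ≤ ε * B * B' * (1 / -(μ i).re) := by
    have hI := norm_integral_exp_mul_le (hμneg i hi) ht fun τ _ => hinner i τ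
    rw [norm_smul]
    calc _ ≤ B' * ε * (1 / -(μ i).re) * B :=
          mul_le_mul hI (hubound i t) (norm_nonneg _) ((norm_nonneg _).trans hI)
      _ = ε * B * B' * (1 / -(μ i).re) := by ring
  rw [← Finset.sum_filter_of_ne (p := (· ≠ i₀)) fun i _ hne hi => hne (hi ▸ hneutral),
    Finset.mul_sum]
  exact (norm_sum_le _ _).trans
    (Finset.sum_le_sum fun i hi => hdecaying i (Finset.mem_filter.mp hi).2)

/-- Key quantitative step of the hierarchical PPV theorem: with one Floquet exponent
`μ₀ = 0` and the rest having strictly negative real part, if the residual input `b` is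
orthogonal to `v₀` and bounded by `ε`, the Floquet-form response stays bounded for all
`t ≥ t₀` by `ε·B·B'·Σ_{i ≠ 0} 1/(−Re μᵢ)`. -/
theorem hierarchical_PPV_response_bounded
    (N m : ℕ) (hN : 1 ≤ N) (hm : 0 < m)
    (u v : Fin m → ℝ → EuclideanSpace ℂ (Fin N))
    (hucont : ∀ i : Fin m, Continuous (u i))
    (hvcont : ∀ i : Fin m, Continuous (v i))
    (B B' : ℝ) (hB : 0 ≤ B) (hB' : 0 ≤ B')
    (hubound : ∀ (i : Fin m) (t : ℝ), ‖u i t‖ ≤ B)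
    (hvbound : ∀ (i : Fin m) (t : ℝ), ‖v i t‖ ≤ B')
    (μ : Fin m → ℂ)
    (hμ0 : μ ⟨0, hm⟩ = 0)
    (hμneg : ∀ i : Fin m, i ≠ ⟨0, hm⟩ → (μ i).re < 0)
    (b : ℝ → EuclideanSpace ℂ (Fin N)) (hbcont : Continuous b)
    (ε : ℝ) (hε : 0 ≤ ε)
    (hbbound : ∀ τ : ℝ, ‖b τ‖ ≤ ε)
    (horth : ∀ τ : ℝ, (inner ℂ (v ⟨0, hm⟩ τ) (b τ) : ℂ) = 0)
    (t₀ : ℝ) :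
    ∀ t : ℝ, t₀ ≤ t →
      ‖∑ i : Fin m,
          (∫ τ in t₀..t, Complex.exp (μ i * (t - τ)) * (inner ℂ (v i τ) (b τ) : ℂ)) •
            u i t‖ ≤
        ε * B * B' * ∑ i ∈ Finset.univ.filter (· ≠ (⟨0, hm⟩ : Fin m)),
          1 / (-(μ i).re) :=
  hierarchical_PPV_response_bounded_general N m hm u v B B' hB' hubound hvbound μ hμneg b ε hbbound
    horth t₀
end
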